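/- arXiv:1103.4540 — 9 statements merged into one kernel-verified Lean document; each statement's English description precedes it below -/
import Mathlib

section
/- The phylogeny graph of a doubly partial order is an interval graph. That is, if D is a digraph whose vertex set is a finite set V of points in ℝ² and whose arcs are exactly the pairs (x,v) with v ≺ x (where v ≺ x means v₁ < x₁ and v₂ < x₂), then there is an assignment J of closed real intervals to the vertices of the phylogeny graph of D such that two distinct vertices u,w are adjacent if and only if J(u) ∩ J(w) ≠ ∅. -/
/-- `prec x y` means `x₁ < y₁` and `x₂ < y₂`, written `x ≺ y`. -/
def prec (x y : ℝ × ℝ) : Prop := x.1 < y.1 ∧ x.2 < y.2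

/-- The phylogeny graph of the doubly partial order on a finite set
`V ⊆ ℝ²` (arcs `(x,v)` exactly when `v ≺ x`): distinct `u`, `v` are adjacent
iff there is an arc between them or they have a common prey in `V`. -/
def phylogenyGraph (V : Finset (ℝ × ℝ)) : SimpleGraph {p : ℝ × ℝ // p ∈ V} where
  Adj u v := u ≠ v ∧
    (prec u.1 v.1 ∨ prec v.1 u.1 ∨ ∃ z ∈ V, prec z u.1 ∧ prec z v.1)
  symm := by
    constructor
    intro u v h
    exact ⟨Ne.symm h.1, by tauto⟩
  loopless := by
    constructor
    intro u h
    exact h.1 rfl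

/-!
The strict dominance order `≺` on `ℝ²` is the intersection of two linear orders: compare
`(p₁, -p₂)` lexicographically, or do the same after swapping the coordinates. So it suffices to
treat a finite set ranked injectively by two linear orders `x` and `y`. Give `v` the interval
`[m v, y v]`, where `m v` is the least `y`-value among the points `z` with `x z ≤ x v`. The
intervals of `u ≠ w` meet iff some `z` is weakly `x`-left of `u` and weakly `y`-below `w`, and
vice versa; according to how `u` and `w` are ordered, this says that one of them lies below the
other, or that the witness is a third point below both. Finally the finitely many `y`-values are
carried into `ℝ` by an order embedding.
-/

open Set Function

theorem Set.Icc_inter_Icc_nonempty_iff {γ : Type*} [LinearOrder γ] {a b c d : γ} :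
    (Icc a b ∩ Icc c d).Nonempty ↔ a ≤ b ∧ c ≤ d ∧ a ≤ d ∧ c ≤ b := by
  rw [Icc_inter_Icc, nonempty_Icc, sup_le_iff, le_inf_iff, le_inf_iff]
  tauto

section TwoLinearOrders

variable {α β γ : Type*} [LinearOrder β] [LinearOrder γ] (x : α → β) (y : α → γ)

def Below (u w : α) : Prop := x u < x w ∧ y u < y w

def leftMin [Fintype α] (v : α) : γ :=
  (Finset.univ.filter fun z => x z ≤ x v).inf'
    (Finset.filter_nonempty_iff.2 ⟨v, Finset.mem_univ v, le_rfl⟩) y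

variable {x y}

theorem below_and_below_of_le_of_le (hx : Injective x) (hy : Injective y) {u w z : α}
    (hxz : x z ≤ x u) (hyz : y z ≤ y w) (hxuw : x u < x w) (hywu : y w < y u) :
    Below x y z u ∧ Below x y z w := by
  have hxz' : x z < x u := hxz.lt_of_ne <| hx.ne <| by rintro rfl; exact hywu.not_ge hyz
  have hyz' : y z < y w := hyz.lt_of_ne <| hy.ne <| by rintro rfl; exact hxuw.not_ge hxz
  exact ⟨⟨hxz', hyz'.trans hywu⟩, ⟨hxz'.trans hxuw, hyz'⟩⟩

variable [Fintype α]

theorem leftMin_le_iff {v : α} {c : γ} :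
    leftMin x y v ≤ c ↔ ∃ z, x z ≤ x v ∧ y z ≤ c := by
  rw [leftMin, Finset.inf'_le_iff]
  simp

theorem leftMin_le_self (v : α) : leftMin x y v ≤ y v :=
  leftMin_le_iff.2 ⟨v, le_rfl, le_rfl⟩

theorem below_or_exists_below_iff_Icc_inter_nonempty (hx : Injective x) (hy : Injective y)
    {u w : α} (huw : u ≠ w) :
    (Below x y u w ∨ Below x y w u ∨ ∃ z, Below x y z u ∧ Below x y z w) ↔
      (Icc (leftMin x y u) (y u) ∩ Icc (leftMin x y w) (y w)).Nonempty := by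
  simp only [Icc_inter_Icc_nonempty_iff, leftMin_le_self, true_and, leftMin_le_iff]
  constructor
  · rintro (⟨hxuw, hyuw⟩ | ⟨hxwu, hywu⟩ | ⟨z, ⟨hzu₁, hzu₂⟩, hzw₁, hzw₂⟩)
    · exact ⟨⟨u, le_rfl, hyuw.le⟩, ⟨u, hxuw.le, le_rfl⟩⟩
    · exact ⟨⟨w, hxwu.le, le_rfl⟩, ⟨w, le_rfl, hywu.le⟩⟩
    · exact ⟨⟨z, hzu₁.le, hzw₂.le⟩, ⟨z, hzw₁.le, hzu₂.le⟩⟩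
  · rintro ⟨⟨z, hzu, hzw⟩, ⟨z', hz'w, hz'u⟩⟩
    rcases (hx.ne huw).lt_or_gt with hxuw | hxwu <;>
      rcases (hy.ne huw).lt_or_gt with hyuw | hywu
    · exact Or.inl ⟨hxuw, hyuw⟩
    · exact Or.inr <| Or.inr ⟨z, below_and_below_of_le_of_le hx hy hzu hzw hxuw hywu⟩
    · exact Or.inr <| Or.inr ⟨z', (below_and_below_of_le_of_le hx hy hz'w hz'u hxwu hyuw).symm⟩
    · exact Or.inr <| Or.inl ⟨hxwu, hywu⟩

end TwoLinearOrders

def lexDualSnd (p : ℝ × ℝ) : ℝ ×ₗ ℝᵒᵈ := toLex (p.1, OrderDual.toDual p.2)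

theorem lexDualSnd_injective : Injective lexDualSnd := fun p q h => by
  simpa [lexDualSnd, Prod.ext_iff] using h

theorem prec_iff_lexDualSnd_lt_and_lexDualSnd_swap_lt {p q : ℝ × ℝ} :
    prec p q ↔ lexDualSnd p < lexDualSnd q ∧ lexDualSnd p.swap < lexDualSnd q.swap := by
  simp only [prec, lexDualSnd, Prod.Lex.toLex_lt_toLex, OrderDual.toDual_lt_toDual,
    Prod.fst_swap, Prod.snd_swap]
  constructor
  · rintro ⟨h1, h2⟩; exact ⟨Or.inl h1, Or.inl h2⟩
  · rintro ⟨h1 | ⟨e1, h1⟩, h2 | ⟨e2, h2⟩⟩ <;> constructor <;> linarith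

/-- The phylogeny graph of a doubly partial order is an interval graph. -/
theorem phylogenyGraph_isIntervalGraph (V : Finset (ℝ × ℝ)) :
    ∃ J : {p : ℝ × ℝ // p ∈ V} → Set ℝ,
      (∀ v, ∃ a b : ℝ, a ≤ b ∧ J v = Set.Icc a b) ∧
      (∀ u w, u ≠ w → ((phylogenyGraph V).Adj u w ↔ (J u ∩ J w).Nonempty)) := by
  obtain ⟨e⟩ :=
    Order.embedding_from_countable_to_dense (range fun v : V => lexDualSnd v.1.swap) ℝ
  let x : V → ℝ ×ₗ ℝᵒᵈ := fun v => lexDualSnd v.1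
  let y : V → ℝ := fun v => e (rangeFactorization (fun v : V => lexDualSnd v.1.swap) v)
  have hx : Injective x := lexDualSnd_injective.comp Subtype.val_injective
  have hy : Injective y := e.injective.comp <| rangeFactorization_injective.2 <|
    (lexDualSnd_injective.comp Prod.swap_injective).comp Subtype.val_injective
  have below_iff_prec (u w : V) : Below x y u w ↔ prec u.1 w.1 := by
    rw [prec_iff_lexDualSnd_lt_and_lexDualSnd_swap_lt]
    exact and_congr_right' e.lt_iff_lt
  refine ⟨fun v => Icc (leftMin x y v) (y v), fun v => ⟨_, _, leftMin_le_self v, rfl⟩,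
    fun u w huw => ?_⟩
  rw [← below_or_exists_below_iff_Icc_inter_nonempty hx hy huw]
  simp only [phylogenyGraph, below_iff_prec, Subtype.exists, exists_prop, ne_eq, huw,
    not_false_eq_true, true_and]
end

section
/- The competition graph of a doubly partial order is an interval graph. That is, if D is a digraph whose vertex set is a finite set V ⊆ ℝ² and whose arcs are exactly the pairs (x,v) with v ≺ x, then the graph on V in which distinct u,w are adjacent iff there exists z ∈ V with z ≺ u and z ≺ w is an interval graph. -/
/-- The competition graph of the doubly partial order on a finite set
`V ⊆ ℝ²` (arcs `(x,v)` exactly when `v ≺ x`): distinct `u`, `w` are adjacent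
iff there is `z ∈ V` with `z ≺ u` and `z ≺ w`. -/
def competitionGraph (V : Finset (ℝ × ℝ)) : SimpleGraph {p : ℝ × ℝ // p ∈ V} where
  Adj u w := u ≠ w ∧ ∃ z ∈ V, prec z u.1 ∧ prec z w.1
  symm := by
    constructor
    intro u w h
    exact ⟨Ne.symm h.1, by tauto⟩
  loopless := by
    constructor
    intro u h
    exact h.1 rfl

/-!
Give each vertex `v` the interval spanned by the first coordinates of its prey. If the
intervals of `u` and `w` meet, then `u` has a prey `z` with `z₁ < w₁` and `w` has a prey `t`
with `t₁ < u₁`; if `t₂ < z₂` then `t ≺ u`, and otherwise `z ≺ w`, so one of them is a common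
prey. Vertices without prey are isolated and get distinct points to the right of all the other
intervals.
-/

open Set

/-- The convex hulls of `A` and `B` meet; phrased without `min'`/`max'` so that it is also
meaningful (and false) when a set is empty. -/
def HullsMeet (A B : Finset ℝ) : Prop :=
  (∃ b ∈ B, ∃ a ∈ A, a ≤ b) ∧ ∃ a ∈ A, ∃ b ∈ B, b ≤ a

theorem hullsMeet_iff_Icc_inter_Icc_nonempty {A B : Finset ℝ} (hA : A.Nonempty)
    (hB : B.Nonempty) :
    HullsMeet A B ↔ (Icc (A.min' hA) (A.max' hA) ∩ Icc (B.min' hB) (B.max' hB)).Nonempty := by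
  rw [Icc_inter_Icc, nonempty_Icc, sup_le_iff, le_inf_iff, le_inf_iff]
  simp only [A.min'_le_max' hA, B.min'_le_max' hB, true_and, and_true]
  simp only [HullsMeet, Finset.min'_eq_inf', Finset.max'_eq_sup', Finset.inf'_le_iff,
    Finset.le_sup'_iff, id]

theorem hullsMeet_comm {A B : Finset ℝ} : HullsMeet A B ↔ HullsMeet B A :=
  and_comm

theorem not_hullsMeet_of_forall_lt {A B : Finset ℝ} (h : ∀ a ∈ A, ∀ b ∈ B, a < b) :
    ¬HullsMeet A B := fun ⟨_, a, ha, b, hb, hba⟩ => (h a ha b hb).not_ge hba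

theorem not_hullsMeet_empty_left (B : Finset ℝ) : ¬HullsMeet ∅ B :=
  not_hullsMeet_of_forall_lt (by simp)

theorem hullsMeet_singleton_singleton {a b : ℝ} : HullsMeet {a} {b} ↔ a = b := by
  simp only [HullsMeet, Finset.mem_singleton, exists_eq_left]
  exact le_antisymm_iff.symm

open Classical in
theorem hullsMeet_iff_hullsMeet_ite_singleton {α : Type*} {S : α → Finset ℝ} {c : α → ℝ}
    (hc : ∀ v, ∀ a ∈ S v, ∀ w, a < c w) (hc_inj : Function.Injective c) {u w : α}
    (huw : u ≠ w) :
    HullsMeet (S u) (S w) ↔ HullsMeet (if (S u).Nonempty then S u else {c u})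
      (if (S w).Nonempty then S w else {c w}) := by
  have h_isolated : ∀ u w, ¬(S w).Nonempty →
      (HullsMeet (S u) (S w) ↔ HullsMeet (S u) {c w}) := fun u w hw => by
    rw [Finset.not_nonempty_iff_eq_empty.mp hw, hullsMeet_comm]
    refine iff_of_false (not_hullsMeet_empty_left _) (not_hullsMeet_of_forall_lt ?_)
    simpa using fun a ha => hc u a ha w
  by_cases hu : (S u).Nonempty <;> by_cases hw : (S w).Nonempty <;>
    simp only [hu, hw, if_true, if_false]
  · exact h_isolated u w hw
  · rw [hullsMeet_comm, h_isolated w u hu, hullsMeet_comm]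
  · rw [Finset.not_nonempty_iff_eq_empty.mp hu, hullsMeet_singleton_singleton]
    exact iff_of_false (not_hullsMeet_empty_left _) (hc_inj.ne huw)

theorem exists_Icc_hullsMeet_iff {α : Type*} [Finite α] (S : α → Finset ℝ) :
    ∃ J : α → Set ℝ, (∀ v, ∃ a b : ℝ, a ≤ b ∧ J v = Icc a b) ∧
      ∀ u w, u ≠ w → (HullsMeet (S u) (S w) ↔ (J u ∩ J w).Nonempty) := by
  classical
  have : Fintype α := Fintype.ofFinite α
  obtain ⟨M, hM⟩ := (Finset.univ.biUnion S).bddAbove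
  obtain ⟨e, he⟩ := Countable.exists_injective_nat α
  let c v : ℝ := M + 1 + e v
  have hc : ∀ v, ∀ a ∈ S v, ∀ w, a < c w := fun v a ha w => by
    have : a ≤ M := hM (by simpa using ⟨v, ha⟩)
    have : (0 : ℝ) ≤ e w := Nat.cast_nonneg _
    linarith
  have hc_inj : Function.Injective c := fun v w h => he (by simpa [c] using h)
  let T v : Finset ℝ := if (S v).Nonempty then S v else {c v}
  have hT : ∀ v, (T v).Nonempty := fun v => by
    by_cases h : (S v).Nonempty <;> simp [T, h]
  refine ⟨fun v => Icc ((T v).min' (hT v)) ((T v).max' (hT v)),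
    fun v => ⟨_, _, (T v).min'_le_max' (hT v), rfl⟩, fun u w huw => ?_⟩
  rw [hullsMeet_iff_hullsMeet_ite_singleton hc hc_inj huw, ← hullsMeet_iff_Icc_inter_Icc_nonempty]

theorem prec_or_prec_of_fst_lt {z t u w : ℝ × ℝ} (hz : prec z u) (ht : prec t w)
    (hzw : z.1 < w.1) (htu : t.1 < u.1) : prec z w ∨ prec t u := by
  rcases lt_or_ge t.2 z.2 with h | h
  · exact .inr ⟨htu, h.trans hz.2⟩
  · exact .inl ⟨hzw, h.trans_lt ht.2⟩

open Classical in
noncomputable def preyFst (V : Finset (ℝ × ℝ)) (v : ℝ × ℝ) : Finset ℝ :=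
  (V.filter (prec · v)).image Prod.fst

theorem exists_common_prey_iff_hullsMeet (V : Finset (ℝ × ℝ)) (u w : ℝ × ℝ) :
    (∃ z ∈ V, prec z u ∧ prec z w) ↔ HullsMeet (preyFst V u) (preyFst V w) := by
  simp only [HullsMeet, preyFst, Finset.exists_mem_image, Finset.mem_filter]
  constructor
  · rintro ⟨z, hzV, hzu, hzw⟩
    exact ⟨⟨z, ⟨hzV, hzw⟩, z, ⟨hzV, hzu⟩, le_rfl⟩, z, ⟨hzV, hzu⟩, z, ⟨hzV, hzw⟩, le_rfl⟩
  · rintro ⟨⟨t', ⟨-, ht'w⟩, z, ⟨hzV, hzu⟩, hzt'⟩, z', ⟨-, hz'u⟩, t, ⟨htV, htw⟩, htz'⟩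
    rcases prec_or_prec_of_fst_lt hzu htw (hzt'.trans_lt ht'w.1) (htz'.trans_lt hz'u.1)
      with h | h
    · exact ⟨z, hzV, hzu, h⟩
    · exact ⟨t, htV, h, htw⟩

/-- The competition graph of a doubly partial order is an interval graph. -/
theorem competitionGraph_isIntervalGraph (V : Finset (ℝ × ℝ)) :
    ∃ J : {p : ℝ × ℝ // p ∈ V} → Set ℝ,
      (∀ v, ∃ a b : ℝ, a ≤ b ∧ J v = Set.Icc a b) ∧
      (∀ u w, u ≠ w → ((competitionGraph V).Adj u w ↔ (J u ∩ J w).Nonempty)) := by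
  obtain ⟨J, hJ, hadj⟩ := exists_Icc_hullsMeet_iff fun v : {p // p ∈ V} => preyFst V v.1
  refine ⟨J, hJ, fun u w huw => ?_⟩
  rw [← hadj u w huw, ← exists_common_prey_iff_hullsMeet]
  exact and_iff_right huw
end

section
/- Any interval graph can be made into the competition graph of a doubly partial order by adding sufficiently many isolated vertices: for every interval graph G there exists a natural number k and a doubly partial order D such that the competition graph of D is isomorphic to the graph obtained from G by adding k isolated vertices. -/
/-- A graph is an interval graph if there is an assignment of closed real
intervals to its vertices such that distinct vertices are adjacent iff the
corresponding intervals intersect. -/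
def IsIntervalGraph {α : Type*} (G : SimpleGraph α) : Prop :=
  ∃ J : α → Set ℝ,
    (∀ v, ∃ a b : ℝ, a ≤ b ∧ J v = Set.Icc a b) ∧
    (∀ u w, u ≠ w → (G.Adj u w ↔ (J u ∩ J w).Nonempty))

/-- The graph obtained from `G` by adding `k` isolated vertices. -/
def addIsolated {α : Type*} (G : SimpleGraph α) (k : ℕ) :
    SimpleGraph (α ⊕ Fin k) where
  Adj x y := ∃ a b : α, x = Sum.inl a ∧ y = Sum.inl b ∧ G.Adj a b
  symm := by
    constructor
    rintro x y ⟨a, b, rfl, rfl, hab⟩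
    exact ⟨b, a, rfl, rfl, hab.symm⟩
  loopless := by
    constructor
    rintro x ⟨a, b, rfl, hba, hab⟩
    rw [Sum.inl.injEq] at hba
    subst hba
    exact hab.ne rfl

/-!
Compress the endpoints of an interval representation to integers by ranking them, then send the
interval `[a, b]` of a vertex to the point `(b, -a)`, shifted along the diagonal by a small amount
that separates vertices with equal intervals. For every left endpoint `t` add a prey point just
below `(t, -t)` on the line `x + y = -1`: it lies below the point of `[a, b]` exactly when
`a ≤ t ≤ b`. Two vertices then have a common prey iff their intervals meet (a vertex below both
has its interval inside both), and the prey points, having nothing below them, are isolated.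
-/

open Set Function

lemma Finset.exists_int_le_iff_le {β : Type*} [LinearOrder β] (s : Finset β) :
    ∃ r : β → ℤ, ∀ x ∈ s, ∀ y, r x ≤ r y ↔ x ≤ y := by
  refine ⟨fun x => (s.filter (· ≤ x)).card, fun x hx y => ⟨fun h => ?_, fun h => ?_⟩⟩
  · by_contra! hyx
    have hmono : s.filter (· ≤ y) ⊆ s.filter (· ≤ x) :=
      Finset.monotone_filter_right s fun _ _ hz => hz.trans hyx.le
    have hsub : s.filter (· ≤ y) ⊂ s.filter (· ≤ x) :=
      (Finset.ssubset_iff_of_subset hmono).2 ⟨x, by simp [hx], by simp [hyx]⟩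
    exact absurd h (not_le.2 (Nat.cast_lt.2 (Finset.card_lt_card hsub)))
  · exact Nat.cast_le.2
      (Finset.card_le_card (Finset.monotone_filter_right s fun _ _ hz => hz.trans h))

theorem IsIntervalGraph.exists_int_endpoints {α : Type*} [Fintype α] {G : SimpleGraph α}
    (hG : IsIntervalGraph G) :
    ∃ a b : α → ℤ, (∀ v, a v ≤ b v) ∧
      ∀ u v, u ≠ v → (G.Adj u v ↔ (Icc (a u) (b u) ∩ Icc (a v) (b v)).Nonempty) := by
  obtain ⟨J, hJ, hadj⟩ := hG
  choose a b hab hJab using hJ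
  obtain ⟨r, hr⟩ := (Finset.univ.image a ∪ Finset.univ.image b).exists_int_le_iff_le
  have hra : ∀ v y, r (a v) ≤ r y ↔ a v ≤ y := fun v => hr _ (by simp)
  have hrb : ∀ v y, r (b v) ≤ r y ↔ b v ≤ y := fun v => hr _ (by simp)
  refine ⟨r ∘ a, r ∘ b, fun v => (hra v _).2 (hab v), fun u v huv => ?_⟩
  simp only [hadj u v huv, hJab, Icc_inter_Icc, nonempty_Icc, sup_le_iff, le_inf_iff, comp_apply,
    hra]

lemma exists_injective_mem_Ico_zero_half (α : Type*) [Countable α] :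
    ∃ δ : α → ℝ, Injective δ ∧ ∀ v, δ v ∈ Ico (0 : ℝ) (1 / 2) := by
  obtain ⟨e, he⟩ := exists_injective_nat α
  refine ⟨fun v => 1 / ((e v : ℝ) + 3), fun u v h => he ?_, fun v => ⟨by positivity, ?_⟩⟩
  · simpa using h
  · rw [div_lt_div_iff₀ (by positivity) (by positivity)]
    linarith [(e v).cast_nonneg (α := ℝ)]

lemma Int.le_of_cast_lt_add_one {m n : ℤ} (h : (m : ℝ) < n + 1) : m ≤ n :=
  Int.lt_add_one_iff.1 (by exact_mod_cast h)

lemma prec.add_lt {p q : ℝ × ℝ} (h : prec p q) : p.1 + p.2 < q.1 + q.2 :=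
  add_lt_add h.1 h.2

noncomputable def vertexPoint (a b : ℤ) (d : ℝ) : ℝ × ℝ := ((b : ℝ) + d, -(a : ℝ) + d)

noncomputable def preyPoint (t : ℤ) : ℝ × ℝ := ((t : ℝ) - 1 / 2, -(t : ℝ) - 1 / 2)

section Points

variable {a b a' b' t : ℤ} {d d' : ℝ}

lemma preyPoint_prec_vertexPoint_iff (hd : d ∈ Ico (0 : ℝ) (1 / 2)) :
    prec (preyPoint t) (vertexPoint a b d) ↔ t ∈ Icc a b := by
  obtain ⟨hd₀, hd₁⟩ := hd
  simp only [prec, preyPoint, vertexPoint, mem_Icc]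
  constructor
  · rintro ⟨h₁, h₂⟩
    exact ⟨Int.le_of_cast_lt_add_one (by linarith), Int.le_of_cast_lt_add_one (by linarith)⟩
  · rintro ⟨h₁, h₂⟩
    have h₁ : (a : ℝ) ≤ t := by exact_mod_cast h₁
    have h₂ : (t : ℝ) ≤ b := by exact_mod_cast h₂
    constructor <;> linarith

lemma Icc_subset_of_vertexPoint_prec (hd : 0 ≤ d) (hd' : d' < 1 / 2)
    (h : prec (vertexPoint a b d) (vertexPoint a' b' d')) : Icc a b ⊆ Icc a' b' := by
  obtain ⟨h₁, h₂⟩ := h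
  simp only [vertexPoint] at h₁ h₂
  exact Icc_subset_Icc (Int.le_of_cast_lt_add_one (by linarith))
    (Int.le_of_cast_lt_add_one (by linarith))

lemma eq_of_vertexPoint_eq (hd : d ∈ Ico (0 : ℝ) (1 / 2)) (hd' : d' ∈ Ico (0 : ℝ) (1 / 2))
    (h : vertexPoint a b d = vertexPoint a' b' d') : d = d' := by
  have h₁ : (b : ℝ) + d = b' + d' := congrArg Prod.fst h
  have hb : b = b' := le_antisymm (Int.le_of_cast_lt_add_one (by linarith [hd.1, hd'.2]))
    (Int.le_of_cast_lt_add_one (by linarith [hd.2, hd'.1]))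
  subst hb
  linarith

lemma preyPoint_injective : Injective preyPoint := fun s t h => by
  have h₁ : (s : ℝ) - 1 / 2 = t - 1 / 2 := congrArg Prod.fst h
  exact_mod_cast sub_left_inj.1 h₁

lemma preyPoint_fst_add_snd (t : ℤ) : (preyPoint t).1 + (preyPoint t).2 = -1 := by
  simp only [preyPoint]
  ring

lemma vertexPoint_fst_add_snd_nonneg (hab : a ≤ b) (hd : 0 ≤ d) :
    0 ≤ (vertexPoint a b d).1 + (vertexPoint a b d).2 := by
  have : (a : ℝ) ≤ b := by exact_mod_cast hab
  simp only [vertexPoint]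
  linarith

lemma not_prec_preyPoint {p : ℝ × ℝ} (hp : -1 ≤ p.1 + p.2) : ¬ prec p (preyPoint t) :=
  fun h => (h.add_lt.trans_eq (preyPoint_fst_add_snd t)).not_ge hp

lemma vertexPoint_ne_preyPoint (hab : a ≤ b) (hd : 0 ≤ d) : vertexPoint a b d ≠ preyPoint t :=
  fun h => by
    have := vertexPoint_fst_add_snd_nonneg hab hd
    rw [h, preyPoint_fst_add_snd] at this
    norm_num at this

end Points

section IntervalPoints

variable {α ι : Type*} (a b : α → ℤ) (δ : α → ℝ) (c : ι → ℤ)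

noncomputable def intervalPoints : α ⊕ ι → ℝ × ℝ :=
  Sum.elim (fun v => vertexPoint (a v) (b v) (δ v)) (preyPoint ∘ c)

lemma intervalPoints_injective (hab : ∀ v, a v ≤ b v) (hδ : ∀ v, δ v ∈ Ico (0 : ℝ) (1 / 2))
    (hδ_inj : Injective δ) (hc : Injective c) : Injective (intervalPoints a b δ c) := by
  rintro (u | i) (v | j) h
  · exact congrArg Sum.inl (hδ_inj (eq_of_vertexPoint_eq (hδ u) (hδ v) h))
  · exact absurd h (vertexPoint_ne_preyPoint (hab u) (hδ u).1)
  · exact absurd h.symm (vertexPoint_ne_preyPoint (hab v) (hδ v).1)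
  · exact congrArg Sum.inr (hc (preyPoint_injective h))

lemma not_intervalPoints_prec_inr (hab : ∀ v, a v ≤ b v) (hδ : ∀ v, 0 ≤ δ v) (z : α ⊕ ι)
    (i : ι) :
    ¬ prec (intervalPoints a b δ c z) (intervalPoints a b δ c (.inr i)) := by
  refine not_prec_preyPoint ?_
  rcases z with v | j
  · exact (vertexPoint_fst_add_snd_nonneg (hab v) (hδ v)).trans' (by norm_num)
  · exact (preyPoint_fst_add_snd (c j)).ge

lemma exists_intervalPoints_prec_inl_iff (hab : ∀ v, a v ≤ b v)
    (hδ : ∀ v, δ v ∈ Ico (0 : ℝ) (1 / 2)) (hc : ∀ v, a v ∈ range c) (u v : α) :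
    (∃ z, prec (intervalPoints a b δ c z) (intervalPoints a b δ c (.inl u)) ∧
        prec (intervalPoints a b δ c z) (intervalPoints a b δ c (.inl v))) ↔
      (Icc (a u) (b u) ∩ Icc (a v) (b v)).Nonempty := by
  constructor
  · rintro ⟨w | i, hu, hv⟩
    · have hw : a w ∈ Icc (a w) (b w) := left_mem_Icc.2 (hab w)
      exact ⟨a w, Icc_subset_of_vertexPoint_prec (hδ w).1 (hδ u).2 hu hw,
        Icc_subset_of_vertexPoint_prec (hδ w).1 (hδ v).2 hv hw⟩
    · exact ⟨c i, (preyPoint_prec_vertexPoint_iff (hδ u)).1 hu,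
        (preyPoint_prec_vertexPoint_iff (hδ v)).1 hv⟩
  · rintro ⟨t, ht⟩
    have hmax : a u ⊔ a v ∈ Icc (a u) (b u) ∩ Icc (a v) (b v) := by
      rw [Icc_inter_Icc] at ht ⊢
      exact left_mem_Icc.2 (ht.1.trans ht.2)
    obtain ⟨i, hi⟩ : a u ⊔ a v ∈ range c := by
      rcases max_choice (a u) (a v) with h | h <;> rw [h] <;> apply hc
    refine ⟨.inr i, (preyPoint_prec_vertexPoint_iff (hδ u)).2 ?_,
      (preyPoint_prec_vertexPoint_iff (hδ v)).2 ?_⟩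
    · exact hi ▸ hmax.1
    · exact hi ▸ hmax.2

end IntervalPoints

lemma competitionGraph_map_iso {β : Type*} [Fintype β] (f : β ↪ ℝ × ℝ) (H : SimpleGraph β)
    (hH : ∀ x y, x ≠ y → (H.Adj x y ↔ ∃ z, prec (f z) (f x) ∧ prec (f z) (f y))) :
    Nonempty (competitionGraph (Finset.univ.map f) ≃g H) := by
  let e : β ≃ {p // p ∈ Finset.univ.map f} :=
    Equiv.ofBijective (fun x => ⟨f x, by simp⟩)
      ⟨fun x y h => f.injective (congrArg Subtype.val h), fun ⟨p, hp⟩ => by simpa using hp⟩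
  refine ⟨(⟨e, fun {x y} => ?_⟩ : H ≃g _).symm⟩
  by_cases hxy : x = y
  · subst hxy
    simp
  · simp [competitionGraph, e, hH x y hxy, hxy]
    rfl

lemma addIsolated_adj_inl_inl {α : Type*} (G : SimpleGraph α) (k : ℕ) (u v : α) :
    (addIsolated G k).Adj (.inl u) (.inl v) ↔ G.Adj u v := by
  simp [addIsolated]

/-- Every (finite) interval graph becomes the competition graph of a doubly
partial order after adding sufficiently many isolated vertices. -/
theorem intervalGraph_addIsolated_is_competitionGraph {α : Type*} [Fintype α]
    (G : SimpleGraph α) (hG : IsIntervalGraph G) :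
    ∃ k : ℕ, ∃ V : Finset (ℝ × ℝ),
      Nonempty (competitionGraph V ≃g addIsolated G k) := by
  obtain ⟨a, b, hab, hadj⟩ := hG.exists_int_endpoints
  obtain ⟨δ, hδ_inj, hδ⟩ := exists_injective_mem_Ico_zero_half α
  let T := Finset.univ.image a
  let c := T.orderEmbOfFin rfl
  have hc : ∀ v, a v ∈ range c := fun v => by simp [c, T]
  let f : α ⊕ Fin T.card ↪ ℝ × ℝ :=
    ⟨intervalPoints a b δ c, intervalPoints_injective a b δ c hab hδ hδ_inj c.injective⟩
  have hno_prey := not_intervalPoints_prec_inr a b δ c hab fun v => (hδ v).1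
  refine ⟨T.card, _, competitionGraph_map_iso f _ ?_⟩
  rintro (u | i) (v | j) huv
  · rw [addIsolated_adj_inl_inl, hadj u v fun h => huv (congrArg Sum.inl h)]
    exact (exists_intervalPoints_prec_inl_iff a b δ c hab hδ hc u v).symm
  · exact iff_of_false (by simp [addIsolated]) fun ⟨z, _, hz⟩ => hno_prey z j hz
  all_goals exact iff_of_false (by simp [addIsolated]) fun ⟨z, hz, _⟩ => hno_prey z i hz
end

section
/- Let V be a finite subset of ℝ², let x, y ∈ V be distinct points with x ↘ y (i.e., x₁ ≤ y₁ and y₂ ≤ x₂), and suppose there is no z ∈ V with z ≺ x and z ≺ y. Define f(p) = p₂ − p₁ for p ∈ ℝ². Then for every a ∈ V ∪ {x} with a = x or a ≺ x, and every b ∈ V ∪ {y} with b = y or b ≺ y, one has f(a) > f(b). (Consequently the intervals J(x) = conv{f(a) : a ∈ N⁺(x) ∪ {x}} and J(y) = conv{f(b) : b ∈ N⁺(y) ∪ {y}} satisfy min J(x) > max J(y), hence are disjoint.) -/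
/-- `f p = p₂ - p₁`. -/
def fdiag (p : ℝ × ℝ) : ℝ := p.2 - p.1

/-- If `x ↘ y` (i.e. `x₁ ≤ y₁` and `y₂ ≤ x₂`), `x ≠ y`, and `x`, `y` have no
common prey in `V`, then `f(a) > f(b)` for every `a ∈ N⁺(x) ∪ {x}` and every
`b ∈ N⁺(y) ∪ {y}`.  Consequently `min J(x) > max J(y)`. -/
theorem fdiag_gt_of_searrow (V : Finset (ℝ × ℝ)) (x y : ℝ × ℝ)
    (hx : x ∈ V) (hy : y ∈ V) (hxy : x ≠ y)
    (h1 : x.1 ≤ y.1) (h2 : y.2 ≤ x.2)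
    (hnc : ¬ ∃ z ∈ V, prec z x ∧ prec z y) :
    ∀ a : ℝ × ℝ, (a = x ∨ (a ∈ V ∧ prec a x)) →
    ∀ b : ℝ × ℝ, (b = y ∨ (b ∈ V ∧ prec b y)) →
    fdiag a > fdiag b := by
  push_neg at hnc
  intro a ha b hb
  have hne : x.1 < y.1 ∨ y.2 < x.2 := by
    rcases lt_or_eq_of_le h1 with h | h
    · exact Or.inl h
    rcases lt_or_eq_of_le h2 with h' | h'
    · exact Or.inr h'
    exact absurd (Prod.ext h h'.symm) hxy
  unfold fdiag prec at *
  rcases ha with rfl | ⟨haV, ha1, ha2⟩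
  · rcases hb with rfl | ⟨hbV, hb1, hb2⟩
    · rcases hne with h | h <;> linarith
    · have := hnc b hbV
      by_cases hbx : b.1 < a.1 ∧ b.2 < a.2
      · exact absurd ⟨hb1, hb2⟩ (this hbx)
      push_neg at hbx
      rcases lt_or_ge b.1 a.1 with h | h
      · linarith [hbx h]
      · linarith
  · have hay : ¬ (a.1 < y.1 ∧ a.2 < y.2) := hnc a haV ⟨ha1, ha2⟩
    push_neg at hay
    have ha2y : y.2 ≤ a.2 := hay (lt_of_lt_of_le ha1 h1)
    rcases hb with rfl | ⟨hbV, hb1, hb2⟩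
    · linarith
    · have := hnc b hbV
      by_cases hbx : b.1 < x.1 ∧ b.2 < x.2
      · exact absurd ⟨hb1, hb2⟩ (this hbx)
      push_neg at hbx
      rcases lt_or_ge b.1 x.1 with h | h
      · linarith [hbx h]
      · linarith
end

section
/- Let V be a finite subset of ℝ² and let x, y ∈ V satisfy x ↘ y (i.e., x₁ ≤ y₁ and y₂ ≤ x₂) and y₂ < x₂, and suppose there is no z ∈ V with z ≺ x and z ≺ y. Then every v ∈ V with v ≺ x satisfies f(v) > f(x ∧ y), where f(p) = p₂ − p₁ and x ∧ y = (min{x₁,y₁}, min{x₂,y₂}); equivalently, v₂ − v₁ > y₂ − x₁. -/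
/-- `x ∧ y = (min{x₁,y₁}, min{x₂,y₂})`. -/
def meet (x y : ℝ × ℝ) : ℝ × ℝ := (min x.1 y.1, min x.2 y.2)

/-- If `x ↘ y`, `y₂ < x₂`, and `x`, `y` have no common prey in `V`, then every
`v ∈ V` with `v ≺ x` satisfies `f(v) > f(x ∧ y)`, i.e. `v₂ - v₁ > y₂ - x₁`. -/
theorem fdiag_gt_meet_of_prey (V : Finset (ℝ × ℝ)) (x y : ℝ × ℝ)
    (hx : x ∈ V) (hy : y ∈ V)
    (h1 : x.1 ≤ y.1) (h2 : y.2 ≤ x.2) (h3 : y.2 < x.2)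
    (hnc : ¬ ∃ z ∈ V, prec z x ∧ prec z y) :
    ∀ v ∈ V, prec v x → fdiag v > fdiag (meet x y) := by
  intro v hv hvx
  have hvy : ¬ prec v y := fun h => hnc ⟨v, hv, hvx, h⟩
  simp only [prec, not_and, not_lt] at hvy
  have hv2 : y.2 ≤ v.2 := hvy (lt_of_lt_of_le hvx.1 h1)
  simp only [fdiag, meet, min_eq_left h1, min_eq_right h2]
  have := hvx.1
  linarith
end

section
/- Let V be a finite subset of ℝ² and let x, y ∈ V satisfy x ↘ y (i.e., x₁ ≤ y₁ and y₂ ≤ x₂) and x₁ < y₁, and suppose there is no z ∈ V with z ≺ x and z ≺ y. Then every v ∈ V with v ≺ y satisfies f(v) < f(x ∧ y), where f(p) = p₂ − p₁ and x ∧ y = (min{x₁,y₁}, min{x₂,y₂}); equivalently, v₂ − v₁ < y₂ − x₁. -/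
/-- If `x ↘ y`, `x₁ < y₁`, and `x`, `y` have no common prey in `V`, then every
`v ∈ V` with `v ≺ y` satisfies `f(v) < f(x ∧ y)`, i.e. `v₂ - v₁ < y₂ - x₁`. -/
theorem fdiag_lt_meet_of_prey (V : Finset (ℝ × ℝ)) (x y : ℝ × ℝ)
    (hx : x ∈ V) (hy : y ∈ V)
    (h1 : x.1 ≤ y.1) (h2 : y.2 ≤ x.2) (h3 : x.1 < y.1)
    (hnc : ¬ ∃ z ∈ V, prec z x ∧ prec z y) :
    ∀ v ∈ V, prec v y → fdiag v < fdiag (meet x y) := by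
  intro v hv hvy
  obtain ⟨hv1, hv2⟩ := hvy
  have hvx : ¬ prec v x := fun hpx => hnc ⟨v, hv, hpx, hv1, hv2⟩
  have hx1v : x.1 ≤ v.1 := by
    by_contra h
    exact hvx ⟨lt_of_not_ge h, lt_of_lt_of_le hv2 h2⟩
  simp only [fdiag, meet, min_eq_left h1, min_eq_right h2]
  linarith
end

section
/- Let D be a doubly partial order on a finite set V ⊆ ℝ², and let u, v ∈ V be distinct vertices each having a nonempty out-neighborhood (i.e., there exist a, b ∈ V with a ≺ u and b ≺ v). Then u and v are adjacent in the phylogeny graph of D if and only if u and v have a common prey in D, i.e., there exists z ∈ V with z ≺ u and z ≺ v. -/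
theorem prec_trans {x y z : ℝ × ℝ} (hxy : prec x y) (hyz : prec y z) : prec x z :=
  ⟨hxy.1.trans hyz.1, hxy.2.trans hyz.2⟩

theorem exists_common_prey_of_prec {V : Finset (ℝ × ℝ)} {u v : ℝ × ℝ}
    (hu : ∃ a ∈ V, prec a u) (huv : prec u v) : ∃ z ∈ V, prec z u ∧ prec z v :=
  let ⟨a, haV, hau⟩ := hu
  ⟨a, haV, hau, prec_trans hau huv⟩

/-- If distinct vertices `u` and `v` of a doubly partial order each have a
nonempty out-neighborhood, then `u` and `v` are adjacent in the phylogeny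
graph iff they have a common prey. -/
theorem phylogeny_adj_iff_common_prey (V : Finset (ℝ × ℝ)) (u v : ℝ × ℝ)
    (hu : u ∈ V) (hv : v ∈ V) (huv : u ≠ v)
    (ha : ∃ a ∈ V, prec a u) (hb : ∃ b ∈ V, prec b v) :
    (phylogenyGraph V).Adj ⟨u, hu⟩ ⟨v, hv⟩ ↔ ∃ z ∈ V, prec z u ∧ prec z v := by
  refine ⟨?_, fun hprey => ⟨fun h => huv (congrArg Subtype.val h), Or.inr (Or.inr hprey)⟩⟩
  rintro ⟨-, hprec | hprec | hprey⟩
  · exact exists_common_prey_of_prec ha hprec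
  · obtain ⟨z, hzV, hzv, hzu⟩ := exists_common_prey_of_prec hb hprec
    exact ⟨z, hzV, hzu, hzv⟩
  · exact hprey
end

section
/- Let D be a doubly partial order on a finite set V ⊆ ℝ², and let u, v, b ∈ V with v ≺ u and b ≠ u. If b is adjacent to v in the phylogeny graph of D, then b is adjacent to u in the phylogeny graph of D. -/
/-- Every prey of `v` is a prey of `u`, and `v` itself is a common prey of `u` and of every
predator of `v`; so whatever relates `b` to `v` relates `b` to `u`. -/
theorem phylogenyRel_of_prec {V : Finset (ℝ × ℝ)} {u v b : ℝ × ℝ} (hv : v ∈ V)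
    (hvu : prec v u) (h : prec b v ∨ prec v b ∨ ∃ z ∈ V, prec z b ∧ prec z v) :
    prec b u ∨ prec u b ∨ ∃ z ∈ V, prec z b ∧ prec z u := by
  rcases h with hbv | hvb | ⟨z, hz, hzb, hzv⟩
  · exact Or.inl (prec_trans hbv hvu)
  · exact Or.inr (Or.inr ⟨v, hv, hvb, hvu⟩)
  · exact Or.inr (Or.inr ⟨z, hz, hzb, prec_trans hzv hvu⟩)

/-- In a doubly partial order, if `v ≺ u` and `b ≠ u` is adjacent to `v` in
the phylogeny graph, then `b` is also adjacent to `u` in the phylogeny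
graph. -/
theorem phylogeny_adj_up (V : Finset (ℝ × ℝ)) (u v b : ℝ × ℝ)
    (hu : u ∈ V) (hv : v ∈ V) (hb : b ∈ V)
    (hvu : prec v u) (hbu : b ≠ u)
    (hadj : (phylogenyGraph V).Adj ⟨b, hb⟩ ⟨v, hv⟩) :
    (phylogenyGraph V).Adj ⟨b, hb⟩ ⟨u, hu⟩ :=
  ⟨fun h => hbu (congrArg Subtype.val h), phylogenyRel_of_prec hv hvu hadj.2⟩
end

section
/- Let D be a doubly partial order on a finite set V ⊆ ℝ², define f(p) = p₂ − p₁, and for each vertex x let J(x) = conv{f(a) : a ∈ N⁺(x) ∪ {x}} ⊆ ℝ. If distinct vertices x and y are adjacent in the phylogeny graph of D, then J(x) ∩ J(y) ≠ ∅. -/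
/-- `J(x) = conv{f(a) : a ∈ N⁺(x) ∪ {x}}`, where `N⁺(x) = {v ∈ V : v ≺ x}`. -/
noncomputable def phyloInterval (V : Finset (ℝ × ℝ)) (x : ℝ × ℝ) : Set ℝ :=
  convexHull ℝ (fdiag '' ({v : ℝ × ℝ | v ∈ V ∧ prec v x} ∪ {x}))

theorem fdiag_mem_phyloInterval_self (V : Finset (ℝ × ℝ)) (x : ℝ × ℝ) :
    fdiag x ∈ phyloInterval V x :=
  subset_convexHull ℝ _ ⟨x, Or.inr rfl, rfl⟩

theorem fdiag_mem_phyloInterval_of_prec {V : Finset (ℝ × ℝ)} {v : ℝ × ℝ} (hv : v ∈ V)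
    {x : ℝ × ℝ} (hvx : prec v x) : fdiag v ∈ phyloInterval V x :=
  subset_convexHull ℝ _ ⟨v, Or.inl ⟨hv, hvx⟩, rfl⟩

theorem phyloInterval_inter_nonempty_of_adj_general (V : Finset (ℝ × ℝ))
    (x y : {p : ℝ × ℝ // p ∈ V})
    (hadj : (phylogenyGraph V).Adj x y) :
    (phyloInterval V x.1 ∩ phyloInterval V y.1).Nonempty := by
  obtain ⟨-, hxy | hyx | ⟨z, hzV, hzx, hzy⟩⟩ := hadj
  · exact ⟨fdiag x.1, fdiag_mem_phyloInterval_self V x.1, fdiag_mem_phyloInterval_of_prec x.2 hxy⟩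
  · exact ⟨fdiag y.1, fdiag_mem_phyloInterval_of_prec y.2 hyx, fdiag_mem_phyloInterval_self V y.1⟩
  · exact ⟨fdiag z, fdiag_mem_phyloInterval_of_prec hzV hzx, fdiag_mem_phyloInterval_of_prec hzV hzy⟩

/-- If distinct vertices `x` and `y` are adjacent in the phylogeny graph of a
doubly partial order, then the intervals `J(x)` and `J(y)` intersect. -/
theorem phyloInterval_inter_nonempty_of_adj (V : Finset (ℝ × ℝ))
    (x y : {p : ℝ × ℝ // p ∈ V}) (hxy : x ≠ y)
    (hadj : (phylogenyGraph V).Adj x y) :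
    (phyloInterval V x.1 ∩ phyloInterval V y.1).Nonempty :=
  phyloInterval_inter_nonempty_of_adj_general V x y hadj
end
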